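/- arXiv:2402.06430 — 3 statements merged into one kernel-verified Lean document; each statement's English description precedes it below -/
import Mathlib

section
/- For compact subsets A, B of ℂ with 0 ∉ A and 0 ∉ B, the boundary of the Minkowski product is contained in the Minkowski product of the boundaries: ∂(A ⊗ B) ⊆ ∂A ⊗ ∂B. -/
/-!
`A * B` is compact, hence closed, so a frontier point of it is a product `a * b` with `a ∈ A`,
`b ∈ B` that is not interior. Right multiplication by `b ≠ 0` is a homeomorphism, so if `a` were
interior to `A` it would carry a neighbourhood of `a` into `A * B` and make `a * b` interior.
Hence `a ∈ ∂A`, and symmetrically `b ∈ ∂B`.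
-/

open Set Pointwise

theorem Set.setOf_exists_mem_exists_mem_eq_mul {M : Type*} [Mul M] (s t : Set M) :
    {x | ∃ a ∈ s, ∃ b ∈ t, x = a * b} = s * t := by
  ext
  simp only [mem_ofPred_eq, mem_mul, eq_comm]

section GroupWithZero

variable {G₀ : Type*} [GroupWithZero G₀] [TopologicalSpace G₀] {s t : Set G₀}

theorem mul_mem_interior_mul_of_mem_interior_left [SeparatelyContinuousMul G₀] {a b : G₀}
    (ha : a ∈ interior s) (hb : b ∈ t) (hb0 : b ≠ 0) : a * b ∈ interior (s * t) :=
  interior_maximal (t := (· * b) '' interior s)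
    (image_subset_iff.2 fun _ hx => mul_mem_mul (interior_subset hx) hb)
    ((Homeomorph.mulRight₀ b hb0).isOpenMap _ isOpen_interior) (mem_image_of_mem _ ha)

theorem mul_mem_interior_mul_of_mem_interior_right [SeparatelyContinuousMul G₀] {a b : G₀}
    (ha : a ∈ s) (ha0 : a ≠ 0) (hb : b ∈ interior t) : a * b ∈ interior (s * t) :=
  interior_maximal (t := (a * ·) '' interior t)
    (image_subset_iff.2 fun _ hx => mul_mem_mul ha (interior_subset hx))
    ((Homeomorph.mulLeft₀ a ha0).isOpenMap _ isOpen_interior) (mem_image_of_mem _ hb)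

theorem mul_diff_interior_mul_subset_frontier_mul_frontier [SeparatelyContinuousMul G₀]
    (hs0 : (0 : G₀) ∉ s) (ht0 : (0 : G₀) ∉ t) :
    (s * t) \ interior (s * t) ⊆ frontier s * frontier t := by
  rintro _ ⟨⟨a, ha, b, hb, rfl⟩, hab⟩
  refine mul_mem_mul ⟨subset_closure ha, fun ha' => hab ?_⟩ ⟨subset_closure hb, fun hb' => hab ?_⟩
  · exact mul_mem_interior_mul_of_mem_interior_left ha' hb (ne_of_mem_of_not_mem hb ht0)
  · exact mul_mem_interior_mul_of_mem_interior_right ha (ne_of_mem_of_not_mem ha hs0) hb'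

theorem IsCompact.frontier_mul_subset [ContinuousMul G₀] [T2Space G₀]
    (hs : IsCompact s) (ht : IsCompact t) (hs0 : (0 : G₀) ∉ s) (ht0 : (0 : G₀) ∉ t) :
    frontier (s * t) ⊆ frontier s * frontier t := by
  rw [(hs.mul ht).isClosed.frontier_eq]
  exact mul_diff_interior_mul_subset_frontier_mul_frontier hs0 ht0

end GroupWithZero

theorem frontier_minkowski_prod_subset (A B : Set ℂ) (hA : IsCompact A) (hB : IsCompact B)
    (h0A : (0 : ℂ) ∉ A) (h0B : (0 : ℂ) ∉ B) :
    frontier {x | ∃ a ∈ A, ∃ b ∈ B, x = a * b} ⊆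
    {x | ∃ a ∈ frontier A, ∃ b ∈ frontier B, x = a * b} := by
  simpa only [setOf_exists_mem_exists_mem_eq_mul] using hA.frontier_mul_subset hB h0A h0B
end

section
/- (Gauss map matching for sums) Let F, G : ℝ → ℂ be continuously differentiable regular curves (F'(s) ≠ 0, G'(t) ≠ 0 for all s, t). If F(s₀) + G(t₀) lies on the boundary of the set {F(s) + G(t) | s, t ∈ ℝ}, then the arguments of the tangent vectors agree up to sign of direction: F'(s₀) and G'(t₀) are real scalar multiples of each other (i.e., they are ℝ-linearly dependent). -/
/-!
If `F'(s₀)` and `G'(t₀)` were ℝ-linearly independent, the map `(s, t) ↦ F s + G t` would have a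
surjective strict derivative `(a, b) ↦ a F'(s₀) + b G'(t₀)` at `(s₀, t₀)`. By the inverse function
theorem it is then open at `(s₀, t₀)`, so `F s₀ + G t₀` is an interior point of the set of sums,
not a boundary point.
-/

open Set Filter

theorem HasStrictFDerivAt.mem_interior_range {𝕜 E F : Type*} [NontriviallyNormedField 𝕜]
    [NormedAddCommGroup E] [NormedSpace 𝕜 E] [CompleteSpace E]
    [NormedAddCommGroup F] [NormedSpace 𝕜 F] [CompleteSpace F]
    {f : E → F} {f' : E →L[𝕜] F} {a : E} (hf : HasStrictFDerivAt f f' a)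
    (hsurj : f'.range = ⊤) : f a ∈ interior (range f) := by
  rw [mem_interior_iff_mem_nhds, ← hf.map_nhds_eq_of_surj hsurj, mem_map]
  exact univ_mem' mem_range_self

section Sum

variable {𝕜 E : Type*} [NontriviallyNormedField 𝕜] [NormedAddCommGroup E] [NormedSpace 𝕜 E]

theorem HasStrictDerivAt.add_fst_snd {f g : 𝕜 → E} {v w : E} {s t : 𝕜}
    (hf : HasStrictDerivAt f v s) (hg : HasStrictDerivAt g w t) :
    HasStrictFDerivAt (fun p : 𝕜 × 𝕜 => f p.1 + g p.2)
      ((ContinuousLinearMap.toSpanSingleton 𝕜 v).coprod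
        (ContinuousLinearMap.toSpanSingleton 𝕜 w)) (s, t) :=
  (hf.hasStrictFDerivAt.comp (s, t) (ContinuousLinearMap.fst 𝕜 𝕜 𝕜).hasStrictFDerivAt).add
    (hg.hasStrictFDerivAt.comp (s, t) (ContinuousLinearMap.snd 𝕜 𝕜 𝕜).hasStrictFDerivAt)

theorem range_coprod_toSpanSingleton (v w : E) :
    ((ContinuousLinearMap.toSpanSingleton 𝕜 v).coprod
      (ContinuousLinearMap.toSpanSingleton 𝕜 w)).range = Submodule.span 𝕜 {v, w} := by
  rw [ContinuousLinearMap.coe_coprod, LinearMap.range_coprod, Submodule.span_insert]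
  simp only [ContinuousLinearMap.toLinearMap_toSpanSingleton, LinearMap.range_toSpanSingleton]

end Sum

theorem LinearIndependent.span_pair_eq_top {K V : Type*} [DivisionRing K] [AddCommGroup V]
    [Module K V] {v w : V} (h : LinearIndependent K ![v, w]) (hV : Module.finrank K V = 2) :
    Submodule.span K {v, w} = ⊤ := by
  simpa [Matrix.range_cons_cons_empty, Set.pair_comm] using
    h.span_eq_top_of_card_eq_finrank (by simpa using hV.symm)

theorem gauss_map_matching_sum_general (F G : ℝ → ℂ)
    (hF : ContDiff ℝ 1 F) (hG : ContDiff ℝ 1 G)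
    (s₀ t₀ : ℝ)
    (hb : F s₀ + G t₀ ∈ frontier {z | ∃ s t : ℝ, z = F s + G t}) :
    ¬ LinearIndependent ℝ ![deriv F s₀, deriv G t₀] := by
  intro hli
  have hsum := (hF.contDiffAt (x := s₀).hasStrictDerivAt one_ne_zero).add_fst_snd
    (hG.contDiffAt (x := t₀).hasStrictDerivAt one_ne_zero)
  have hint := hsum.mem_interior_range <| by
    rw [range_coprod_toSpanSingleton, hli.span_pair_eq_top Complex.finrank_real_complex]
  have hrange : range (fun p : ℝ × ℝ => F p.1 + G p.2) = {z | ∃ s t : ℝ, z = F s + G t} := by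
    ext z
    simp [eq_comm]
  exact hb.2 (hrange ▸ hint)

theorem gauss_map_matching_sum (F G : ℝ → ℂ)
    (hF : ContDiff ℝ 1 F) (hG : ContDiff ℝ 1 G)
    (hF' : ∀ s, deriv F s ≠ 0) (hG' : ∀ t, deriv G t ≠ 0)
    (s₀ t₀ : ℝ)
    (hb : F s₀ + G t₀ ∈ frontier {z | ∃ s t : ℝ, z = F s + G t}) :
    ¬ LinearIndependent ℝ ![deriv F s₀, deriv G t₀] :=
  gauss_map_matching_sum_general F G hF hG s₀ t₀ hb
end

section
/- (Gauss map matching for products) Let F, G : ℝ → ℂ be continuously differentiable regular curves avoiding 0. If F(s₀) · G(t₀) lies on the boundary of the set {F(s) · G(t) | s, t ∈ ℝ}, then the logarithmic derivatives F'(s₀)/F(s₀) and G'(t₀)/G(t₀) are ℝ-linearly dependent as vectors in ℂ. -/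
/-!
The map `Φ (s, t) = F s * G t` has derivative `(a, b) ↦ a • F' s₀ G t₀ + b • F s₀ G' t₀` at
`(s₀, t₀)`, i.e. `F s₀ G t₀` times `a • F'/F + b • G'/G`. If the logarithmic derivatives were
independent this derivative would be onto `ℂ ≅ ℝ²`, so by the inverse function theorem the image of
`Φ` would be a neighbourhood of `Φ (s₀, t₀)`, which therefore could not lie on its frontier.
-/

open Filter Topology Module

lemma LinearIndependent.pair_mul_right {R A : Type*} [CommRing R] [Ring A] [NoZeroDivisors A]
    [Algebra R A] {u v c : A} (h : LinearIndependent R ![u, v]) (hc : c ≠ 0) :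
    LinearIndependent R ![u * c, v * c] := by
  refine LinearIndependent.pair_iff.2 fun a b hab => LinearIndependent.pair_iff.1 h a b ?_
  rw [← smul_mul_assoc, ← smul_mul_assoc, ← add_mul] at hab
  exact (mul_eq_zero.1 hab).resolve_right hc

lemma LinearIndependent.exists_smul_add_smul_eq {K V : Type*} [DivisionRing K] [AddCommGroup V]
    [Module K V] (hV : finrank K V = 2) {u v : V} (h : LinearIndependent K ![u, v]) (w : V) :
    ∃ a b : K, a • u + b • v = w := by
  have hspan : Submodule.span K {u, v} = ⊤ := by
    rw [← Matrix.range_cons_cons_empty u v ![]]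
    exact h.span_eq_top_of_card_eq_finrank (by simp [hV])
  exact Submodule.mem_span_pair.1 (hspan ▸ Submodule.mem_top)

lemma hasStrictFDerivAt_mul_prod {A : Type*} [NormedCommRing A] [NormedAlgebra ℝ A]
    {f g : ℝ → A} {f' g' : A} {s₀ t₀ : ℝ}
    (hf : HasStrictDerivAt f f' s₀) (hg : HasStrictDerivAt g g' t₀) :
    HasStrictFDerivAt (fun p : ℝ × ℝ => f p.1 * g p.2)
      ((ContinuousLinearMap.fst ℝ ℝ ℝ).smulRight (f' * g t₀) +
        (ContinuousLinearMap.snd ℝ ℝ ℝ).smulRight (f s₀ * g')) (s₀, t₀) := by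
  have h1 : HasStrictFDerivAt (fun p : ℝ × ℝ => f p.1) _ (s₀, t₀) :=
    hf.hasStrictFDerivAt.comp (s₀, t₀) hasStrictFDerivAt_fst
  have h2 : HasStrictFDerivAt (fun p : ℝ × ℝ => g p.2) _ (s₀, t₀) :=
    hg.hasStrictFDerivAt.comp (s₀, t₀) hasStrictFDerivAt_snd
  refine (h1.fun_mul h2).congr_fderiv ?_
  ext <;> simp [mul_comm]

lemma range_mul_prod_mem_nhds {A : Type*} [NormedCommRing A] [NormedAlgebra ℝ A] (hA : finrank ℝ A = 2)
    {f g : ℝ → A} {f' g' : A} {s₀ t₀ : ℝ}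
    (hf : HasStrictDerivAt f f' s₀) (hg : HasStrictDerivAt g g' t₀)
    (h : LinearIndependent ℝ ![f' * g t₀, f s₀ * g']) :
    Set.range (fun p : ℝ × ℝ => f p.1 * g p.2) ∈ 𝓝 (f s₀ * g t₀) := by
  have : FiniteDimensional ℝ A := Module.finite_of_finrank_eq_succ hA
  have : CompleteSpace A := FiniteDimensional.complete ℝ A
  rw [← (hasStrictFDerivAt_mul_prod hf hg).map_nhds_eq_of_surj ?_]
  · exact range_mem_map
  refine LinearMap.range_eq_top.2 fun w => ?_
  obtain ⟨a, b, hab⟩ := h.exists_smul_add_smul_eq hA w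
  exact ⟨(a, b), by simpa using hab⟩

theorem gauss_map_matching_prod_general (F G : ℝ → ℂ)
    (hF : ContDiff ℝ 1 F) (hG : ContDiff ℝ 1 G)
    (s₀ t₀ : ℝ)
    (hb : F s₀ * G t₀ ∈ frontier {z | ∃ s t : ℝ, z = F s * G t}) :
    ¬ LinearIndependent ℝ ![deriv F s₀ / F s₀, deriv G t₀ / G t₀] := by
  intro h
  -- `x / 0 = 0`, so independence already forces `F s₀ ≠ 0` and `G t₀ ≠ 0`.
  have hFs : F s₀ ≠ 0 := (div_ne_zero_iff.1 (h.ne_zero 0)).2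
  have hGt : G t₀ ≠ 0 := (div_ne_zero_iff.1 (h.ne_zero 1)).2
  have hu : deriv F s₀ / F s₀ * (F s₀ * G t₀) = deriv F s₀ * G t₀ := by field_simp
  have hv : deriv G t₀ / G t₀ * (F s₀ * G t₀) = F s₀ * deriv G t₀ := by field_simp
  have h' := h.pair_mul_right (mul_ne_zero hFs hGt)
  rw [hu, hv] at h'
  have hnhds := range_mul_prod_mem_nhds Complex.finrank_real_complex
    (hF.contDiffAt.hasStrictDerivAt one_ne_zero) (hG.contDiffAt.hasStrictDerivAt one_ne_zero) h'
  refine hb.2 (mem_interior_iff_mem_nhds.2 (mem_of_superset hnhds ?_))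
  rintro _ ⟨p, rfl⟩
  exact ⟨p.1, p.2, rfl⟩

theorem gauss_map_matching_prod (F G : ℝ → ℂ)
    (hF : ContDiff ℝ 1 F) (hG : ContDiff ℝ 1 G)
    (hF0 : ∀ s, F s ≠ 0) (hG0 : ∀ t, G t ≠ 0)
    (hF' : ∀ s, deriv F s ≠ 0) (hG' : ∀ t, deriv G t ≠ 0)
    (s₀ t₀ : ℝ)
    (hb : F s₀ * G t₀ ∈ frontier {z | ∃ s t : ℝ, z = F s * G t}) :
    ¬ LinearIndependent ℝ ![deriv F s₀ / F s₀, deriv G t₀ / G t₀] :=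
  gauss_map_matching_prod_general F G hF hG s₀ t₀ hb
end
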